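/- arXiv:2308.03013 — 2 statements merged into one kernel-verified Lean document; each statement's English description precedes it below -/
import Mathlib

section
/- Let (X, T, ν) be an ergodic probability measure-preserving system and A a measurable set with ν(A) > 1 − ε for some 0 < ε < 1/20. Then for ν-almost every x there exists an increasing sequence of positive integers n₀ < n₁ < n₂ < ⋯ such that T^{n_l}(x) ∈ A for all l ≥ 0 and n_{l+1} − n_l < ε·n_l for all l ≥ 0. -/
/-!
By Kac's lemma, `∑ₘ ν (A ∩ {x | T^[j] x ∉ A for 1 ≤ j ≤ m}) ≤ 1`. Counting each `m` once for
each of the `K` times `n` with `n / K = m`, the events "`T^[n] x ∈ A` but `T^[n + j] x ∉ A` for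
`1 ≤ j ≤ n / K`" have summable measures, so by Borel–Cantelli almost every orbit eventually
returns to `A` within `n / K` steps of each visit at time `n`; for `K > 1 / ε` this gap is
`< ε n`. Poincaré recurrence and ergodicity give infinitely many visits, so starting from a late
visit and following successive returns produces the sequence.
-/

open MeasureTheory Filter Set Function ENNReal

lemma ENNReal.tsum_comp_div (f : ℕ → ℝ≥0∞) (K : ℕ) [NeZero K] :
    ∑' n, f (n / K) = K * ∑' m, f m := by
  calc ∑' n, f (n / K) = ∑' p : ℕ × Fin K, f p.1 :=
        (Nat.divModEquiv K).tsum_eq fun p => f p.1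
    _ = ∑' (m : ℕ) (_ : Fin K), f m := ENNReal.tsum_prod (f := fun m _ => f m)
    _ = K * ∑' m, f m := by simp [ENNReal.tsum_mul_left]

lemma Nat.exists_strictMono_chain {P : ℕ → Prop} {R : ℕ → ℕ → Prop} (hP : ∃ᶠ n in atTop, P n)
    (hR : ∀ᶠ n in atTop, P n → ∃ m, n < m ∧ P m ∧ R n m) :
    ∃ s : ℕ → ℕ, 0 < s 0 ∧ StrictMono s ∧ (∀ l, P (s l)) ∧ ∀ l, R (s l) (s (l + 1)) := by
  obtain ⟨N, hN⟩ := eventually_atTop.1 hR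
  let Q : ℕ → Prop := fun n => N + 1 ≤ n ∧ P n
  have hstep (n : Subtype Q) : ∃ m : Subtype Q, n.1 < m.1 ∧ R n m := by
    obtain ⟨m, hnm, hm, hR⟩ := hN n.1 (by omega) n.2.2
    exact ⟨⟨m, by omega, hm⟩, hnm, hR⟩
  choose next hlt hnext using hstep
  obtain ⟨n₀, hn₀, hPn₀⟩ := frequently_atTop.1 hP (N + 1)
  let s (l : ℕ) : Subtype Q := next^[l] ⟨n₀, hn₀, hPn₀⟩
  have hs (l : ℕ) : s (l + 1) = next (s l) := iterate_succ_apply' next l _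
  refine ⟨fun l => (s l).1, (Nat.succ_pos N).trans_le (s 0).2.1,
    strictMono_nat_of_lt_succ fun l => ?_, fun l => (s l).2.2, fun l => ?_⟩
  · simpa only [hs] using hlt (s l)
  · simpa only [hs] using hnext (s l)

lemma natCast_lt_mul_of_le_div {ε : ℝ} (hε : 0 < ε) {j n : ℕ} (hj : 1 ≤ j)
    (hjn : j ≤ n / (⌊ε⁻¹⌋₊ + 1)) : (j : ℝ) < ε * n := by
  have hεK : 1 < ε * (⌊ε⁻¹⌋₊ + 1 : ℕ) := by
    have := mul_lt_mul_of_pos_left (Nat.lt_floor_add_one ε⁻¹) hε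
    rwa [mul_inv_cancel₀ hε.ne', ← Nat.cast_succ] at this
  have hn : 0 < (n : ℝ) := by
    have := (Nat.div_pos_iff.1 (show 0 < n / (⌊ε⁻¹⌋₊ + 1) by omega)).2
    exact_mod_cast (show 0 < n by omega)
  calc (j : ℝ) ≤ n / (⌊ε⁻¹⌋₊ + 1 : ℕ) := (Nat.cast_le.2 hjn).trans Nat.cast_div_le
    _ < ε * n := by
      rw [div_lt_iff₀ (by positivity)]
      nlinarith

section NoReturn

variable {X : Type*} {T : X → X} {A : Set X}

def noReturnSet (T : X → X) (A : Set X) (m : ℕ) : Set X :=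
  ⋂ j ∈ Finset.Icc 1 m, T^[j] ⁻¹' Aᶜ

@[simp]
lemma mem_noReturnSet {m : ℕ} {x : X} :
    x ∈ noReturnSet T A m ↔ ∀ j ∈ Finset.Icc 1 m, T^[j] x ∉ A := by
  simp [noReturnSet]

@[simp]
lemma noReturnSet_zero : noReturnSet T A 0 = univ := by
  simp [noReturnSet]

lemma preimage_compl_inter_noReturnSet (m : ℕ) :
    T ⁻¹' (Aᶜ ∩ noReturnSet T A m) = noReturnSet T A (m + 1) := by
  ext x
  simp only [mem_preimage, mem_inter_iff, mem_compl_iff, mem_noReturnSet, Finset.mem_Icc,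
    ← iterate_succ_apply]
  constructor
  · rintro ⟨hx, h⟩ j ⟨hj1, hjm⟩
    obtain ⟨k, rfl⟩ := Nat.exists_eq_add_of_le' hj1
    rcases k.eq_zero_or_pos with rfl | hk
    · simpa using hx
    · exact h k ⟨hk, by omega⟩
  · intro h
    exact ⟨by simpa using h 1 ⟨le_rfl, by omega⟩, fun j hj => h (j + 1) ⟨by omega, by omega⟩⟩

variable [MeasurableSpace X] {ν : Measure X}

lemma measurableSet_noReturnSet (hT : Measurable T) (hA : MeasurableSet A) (m : ℕ) :
    MeasurableSet (noReturnSet T A m) :=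
  Finset.measurableSet_biInter _ fun j _ => hT.iterate j hA.compl

lemma measure_inter_noReturnSet_add (hT : MeasurePreserving T ν ν) (hA : MeasurableSet A)
    (m : ℕ) :
    ν (A ∩ noReturnSet T A m) + ν (noReturnSet T A (m + 1)) = ν (noReturnSet T A m) := by
  have hN := measurableSet_noReturnSet hT.measurable hA m
  rw [← preimage_compl_inter_noReturnSet,
    hT.measure_preimage (hA.compl.inter hN).nullMeasurableSet,
    inter_comm A, ← sdiff_eq_compl_inter, measure_inter_add_sdiff _ hA]

lemma sum_measure_inter_noReturnSet_add (hT : MeasurePreserving T ν ν) (hA : MeasurableSet A)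
    (M : ℕ) :
    ∑ m ∈ Finset.range M, ν (A ∩ noReturnSet T A m) + ν (noReturnSet T A M) = ν univ := by
  induction M with
  | zero => simp
  | succ M ih =>
    rw [Finset.sum_range_succ, add_assoc, measure_inter_noReturnSet_add hT hA, ih]

lemma tsum_measure_inter_noReturnSet_le (hT : MeasurePreserving T ν ν) (hA : MeasurableSet A) :
    ∑' m, ν (A ∩ noReturnSet T A m) ≤ ν univ :=
  ENNReal.summable.tsum_le_of_sum_range_le fun M =>
    le_self_add.trans (sum_measure_inter_noReturnSet_add hT hA M).le

lemma MeasureTheory.MeasurePreserving.ae_eventually_exists_return [IsFiniteMeasure ν]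
    (hT : MeasurePreserving T ν ν) (hA : MeasurableSet A) (K : ℕ) [NeZero K] :
    ∀ᵐ x ∂ν, ∀ᶠ n in atTop, T^[n] x ∈ A → ∃ j ∈ Finset.Icc 1 (n / K), T^[n + j] x ∈ A := by
  set longGap : ℕ → Set X := fun n => T^[n] ⁻¹' (A ∩ noReturnSet T A (n / K))
  have hmeas (m : ℕ) : MeasurableSet (A ∩ noReturnSet T A m) :=
    hA.inter (measurableSet_noReturnSet hT.measurable hA m)
  have hsum : ∑' n, ν (longGap n) ≠ ∞ := by
    apply ne_of_lt
    calc ∑' n, ν (longGap n) = ∑' n, ν (A ∩ noReturnSet T A (n / K)) :=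
          tsum_congr fun n => (hT.iterate n).measure_preimage (hmeas _).nullMeasurableSet
      _ = K * ∑' m, ν (A ∩ noReturnSet T A m) := ENNReal.tsum_comp_div (fun m => ν (A ∩ noReturnSet T A m)) K
      _ ≤ K * ν univ := by gcongr; exact tsum_measure_inter_noReturnSet_le hT hA
      _ < ∞ := ENNReal.mul_lt_top (natCast_lt_top K) (measure_lt_top ν univ)
  filter_upwards [ae_eventually_notMem hsum] with x hx
  refine hx.mono fun n hn hxA => ?_
  simpa [longGap, hxA, iterate_add_apply, add_comm n, and_assoc] using hn

lemma MeasureTheory.Ergodic.ae_frequently_mem [IsFiniteMeasure ν] (hT : Ergodic T ν)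
    (hA : MeasurableSet A) (hA0 : ν A ≠ 0) :
    ∀ᵐ x ∂ν, ∃ᶠ n in atTop, T^[n] x ∈ A := by
  set S := {x | ∃ᶠ n in atTop, T^[n] x ∈ A}
  have hS : MeasurableSet S := by
    convert MeasurableSet.measurableSet_limsup fun n => hT.measurable.iterate n hA
    ext x
    simp [S, mem_limsup_iff_frequently_mem]
  have hTS : T ⁻¹' S = S := by
    ext x
    simp only [S, mem_preimage, mem_ofPred_eq, ← iterate_succ_apply]
    conv_rhs => rw [← map_add_atTop_eq_nat 1, frequently_map]
  refine (hT.ae_mem_or_ae_notMem hS hTS).resolve_right fun h => hA0 ?_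
  rw [measure_eq_zero_iff_ae_notMem]
  filter_upwards [h, hT.toMeasurePreserving.conservative.ae_mem_imp_frequently_image_mem
    hA.nullMeasurableSet] with x hxS hrec hxA using hxS (hrec hxA)

end NoReturn

theorem stmt_3_general {X : Type*} [MeasurableSpace X] {T : X → X} {ν : Measure X}
    [IsProbabilityMeasure ν] (hT : Ergodic T ν)
    {A : Set X} (hA : MeasurableSet A) {ε : ℝ} (hε : 0 < ε)
    (hνA : 1 - ENNReal.ofReal ε < ν A) :
    ∀ᵐ x ∂ν, ∃ n : ℕ → ℕ, 0 < n 0 ∧ StrictMono n ∧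
      (∀ l, T^[n l] x ∈ A) ∧ (∀ l, ((n (l+1) : ℝ) - n l) < ε * n l) := by
  have hA0 : ν A ≠ 0 := fun h => by simp [h] at hνA
  filter_upwards [hT.ae_frequently_mem hA hA0,
    hT.toMeasurePreserving.ae_eventually_exists_return hA (⌊ε⁻¹⌋₊ + 1)] with x hfreq hnext
  refine Nat.exists_strictMono_chain (R := fun n m => (m : ℝ) - n < ε * n) hfreq
    (hnext.mono fun n hn hxn => ?_)
  obtain ⟨j, hj, hjA⟩ := hn hxn
  rw [Finset.mem_Icc] at hj
  refine ⟨n + j, by omega, hjA, ?_⟩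
  push_cast
  simpa using natCast_lt_mul_of_le_div hε hj.1 hj.2

theorem stmt_3 {X : Type*} [MeasurableSpace X] {T : X → X} {ν : Measure X}
    [IsProbabilityMeasure ν] (hT : Ergodic T ν)
    {A : Set X} (hA : MeasurableSet A) {ε : ℝ} (hε : 0 < ε) (hε' : ε < 1/20)
    (hνA : 1 - ENNReal.ofReal ε < ν A) :
    ∀ᵐ x ∂ν, ∃ n : ℕ → ℕ, 0 < n 0 ∧ StrictMono n ∧
      (∀ l, T^[n l] x ∈ A) ∧ (∀ l, ((n (l+1) : ℝ) - n l) < ε * n l) :=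
  stmt_3_general hT hA hε hνA
end

section
/- Let f : X → X be a continuous map of a compact metric space which is topologically exact (for every open U with U ∩ X ≠ ∅ there is n with f^n(U) ⊇ X), let J : X → ℝ≥0 be continuous, and let μ be a Borel probability measure on X that is J-conformal: μ(f(A)) = ∫_A J dμ for every Borel set A on which f is injective. If there is a point x not in the support of μ, a ball B around x with μ(B) = 0 and J > 0 on B ∪ f(B) ∪ ⋯, and f^n is a countable-to-one map on each iterate image, then μ(f^n(B)) = 0 for all n; consequently, if f is topologically exact and B can be chosen avoiding the degeneracy set {J = 0}'s forward orbit, the support of μ is all of X. -/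
/-!
Conformality sends Borel null sets on which `f` is injective to null sets. A compact set `K` splits
into countably many Borel pieces on which `f` is injective and whose images cover `f '' K`: the
fibre of `K` over a point is countable and compact, so by Baire's theorem it has an isolated point,
which is then the only point of its fibre in `K ∩ closure V` for a suitable basic open set `V`.
Hence `f` maps σ-compact null sets to null sets, and the open set `B` and all its images
`f^[n] '' B` are σ-compact and null. If `B` were nonempty, exactness would give
`univ ⊆ f^[n] '' B` for some `n`, which is absurd for a probability measure.
-/

open MeasureTheory Set
open scoped ENNReal NNReal

theorem IsCompact.isSigmaCompact_inter_of_isOpen {X : Type*} [PseudoEMetricSpace X]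
    {K U : Set X} (hK : IsCompact K) (hU : IsOpen U) : IsSigmaCompact (K ∩ U) := by
  obtain ⟨F, hF, -, rfl, -⟩ := hU.exists_iUnion_isClosed
  rw [inter_iUnion]
  exact isSigmaCompact_iUnion_of_isCompact _ fun n => hK.inter_right (hF n)

theorem IsOpen.isSigmaCompact {X : Type*} [PseudoEMetricSpace X] [CompactSpace X] {U : Set X}
    (hU : IsOpen U) : IsSigmaCompact U := by
  simpa using isCompact_univ.isSigmaCompact_inter_of_isOpen hU

theorem IsSigmaCompact.measurableSet {X : Type*} [TopologicalSpace X] [T2Space X]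
    [MeasurableSpace X] [OpensMeasurableSpace X] {s : Set X} (hs : IsSigmaCompact s) :
    MeasurableSet s := by
  obtain ⟨K, hK, rfl⟩ := hs
  exact .iUnion fun n => (hK n).measurableSet

theorem exists_isOpen_singleton_of_countable {X : Type*} [TopologicalSpace X] [T1Space X]
    [BaireSpace X] [Countable X] [Nonempty X] : ∃ x : X, IsOpen ({x} : Set X) := by
  obtain ⟨x, hx⟩ := nonempty_interior_of_iUnion_of_closed (f := fun x : X => ({x} : Set X))
    (fun _ => isClosed_singleton) (iUnion_of_singleton X)
  refine ⟨x, ?_⟩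
  rw [← hx.subset_singleton_iff.mp interior_subset]
  exact isOpen_interior

theorem IsCompact.exists_isolated_of_countable {X : Type*} [TopologicalSpace X] [T2Space X]
    {F : Set X} (hF : IsCompact F) (hc : F.Countable) (hne : F.Nonempty) :
    ∃ x ∈ F, ∃ U ∈ nhds x, F ∩ U ⊆ {x} := by
  have : CompactSpace F := isCompact_iff_compactSpace.mp hF
  have : Countable F := hc.to_subtype
  have : Nonempty F := hne.to_subtype
  obtain ⟨x, hx⟩ := exists_isOpen_singleton_of_countable (X := F)
  obtain ⟨U, hU, hUx⟩ := isOpen_induced_iff.mp hx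
  have hxU : x ∈ Subtype.val ⁻¹' U := by rw [hUx]; rfl
  refine ⟨x, x.2, U, hU.mem_nhds hxU, fun y ⟨hyF, hyU⟩ => ?_⟩
  have hyx : (⟨y, hyF⟩ : F) ∈ Subtype.val ⁻¹' U := hyU
  rw [hUx] at hyx
  exact congrArg Subtype.val hyx

def injPart {X Y : Type*} (f : X → Y) (C : Set X) : Set X :=
  {x ∈ C | ∀ x' ∈ C, f x' = f x → x' = x}

theorem injOn_injPart {X Y : Type*} (f : X → Y) (C : Set X) : InjOn f (injPart f C) :=
  fun _ hx _ hx' hxx' => (hx.2 _ hx'.1 hxx'.symm).symm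

theorem injPart_eq_diff_image_fst {X Y : Type*} (f : X → Y) (C : Set X) :
    injPart f C = C \ Prod.fst '' ((C ×ˢ C) ∩ {p | f p.1 = f p.2} ∩ {p | p.1 ≠ p.2}) := by
  ext x
  simp only [injPart, mem_sdiff, mem_ofPred_eq, mem_image, mem_inter_iff, mem_prod]
  refine and_congr_right fun hx => ⟨?_, ?_⟩
  · rintro hinj ⟨⟨x, x'⟩, ⟨⟨⟨-, hx'⟩, hfx⟩, hne⟩, rfl⟩
    exact hne (hinj x' hx' hfx.symm).symm
  · intro hnot x' hx' hfx
    by_contra hne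
    exact hnot ⟨(x, x'), ⟨⟨⟨hx, hx'⟩, hfx.symm⟩, Ne.symm hne⟩, rfl⟩

theorem IsCompact.measurableSet_injPart {X Y : Type*} [EMetricSpace X] [MeasurableSpace X]
    [BorelSpace X] [TopologicalSpace Y] [T2Space Y] {f : X → Y} (hf : Continuous f)
    {C : Set X} (hC : IsCompact C) : MeasurableSet (injPart f C) := by
  have hpairs : IsCompact ((C ×ˢ C) ∩ {p | f p.1 = f p.2}) :=
    (hC.prod hC).inter_right (isClosed_eq (hf.comp continuous_fst) (hf.comp continuous_snd))
  rw [injPart_eq_diff_image_fst]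
  exact hC.measurableSet.diff
    ((hpairs.isSigmaCompact_inter_of_isOpen (isOpen_ne_fun continuous_fst continuous_snd)).image
      continuous_fst).measurableSet

theorem IsCompact.image_subset_biUnion_injPart {X Y : Type*} [TopologicalSpace X] [T2Space X]
    [RegularSpace X] [SecondCountableTopology X] [TopologicalSpace Y] [T1Space Y] {f : X → Y}
    (hf : Continuous f) (hfib : ∀ y, (f ⁻¹' {y}).Countable) {K : Set X} (hK : IsCompact K) :
    f '' K ⊆ ⋃ V ∈ TopologicalSpace.countableBasis X, f '' injPart f (K ∩ closure V) := by
  rintro _ ⟨x₀, hx₀, rfl⟩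
  obtain ⟨x, ⟨hxK, hfx⟩, U, hU, hFU⟩ :=
    (hK.inter_right (isClosed_singleton.preimage hf)).exists_isolated_of_countable
      ((hfib (f x₀)).mono inter_subset_right) ⟨x₀, hx₀, rfl⟩
  obtain ⟨N, hN, hNclosed, hNU⟩ := exists_mem_nhds_isClosed_subset hU
  obtain ⟨V, hV, hxV, hVN⟩ := (TopologicalSpace.isBasis_countableBasis X).mem_nhds_iff.mp hN
  refine mem_biUnion hV ⟨x, ⟨⟨hxK, subset_closure hxV⟩, fun x' hx' hfx' => ?_⟩, hfx⟩
  exact hFU ⟨⟨hx'.1, hfx'.trans hfx⟩, hNU (closure_minimal hVN hNclosed hx'.2)⟩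

section NullImage

variable {X Y : Type*} [MetricSpace X] [SecondCountableTopology X] [MeasurableSpace X]
  [BorelSpace X] [TopologicalSpace Y] [T2Space Y] [MeasurableSpace Y] {f : X → Y}
  {μ : Measure X} {ν : Measure Y}

theorem IsCompact.measure_image_eq_zero (hf : Continuous f)
    (hfib : ∀ y, (f ⁻¹' {y}).Countable)
    (hnull : ∀ A, MeasurableSet A → InjOn f A → μ A = 0 → ν (f '' A) = 0)
    {K : Set X} (hK : IsCompact K) (hμK : μ K = 0) : ν (f '' K) = 0 := by
  refine measure_mono_null (hK.image_subset_biUnion_injPart hf hfib)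
    ((measure_biUnion_null_iff (TopologicalSpace.countable_countableBasis X)).mpr fun V _ => ?_)
  have hKV : IsCompact (K ∩ closure V) := hK.inter_right isClosed_closure
  exact hnull _ (hKV.measurableSet_injPart hf) (injOn_injPart f _)
    (measure_mono_null ((sep_subset _ _).trans inter_subset_left) hμK)

theorem IsSigmaCompact.measure_image_eq_zero (hf : Continuous f)
    (hfib : ∀ y, (f ⁻¹' {y}).Countable)
    (hnull : ∀ A, MeasurableSet A → InjOn f A → μ A = 0 → ν (f '' A) = 0)
    {S : Set X} (hS : IsSigmaCompact S) (hμS : μ S = 0) : ν (f '' S) = 0 := by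
  obtain ⟨K, hK, rfl⟩ := hS
  rw [image_iUnion]
  exact measure_iUnion_null fun n =>
    (hK n).measure_image_eq_zero hf hfib hnull (measure_mono_null (subset_iUnion K n) hμS)

end NullImage

theorem stmt_5_general {X : Type*} [MetricSpace X] [CompactSpace X]
    [MeasurableSpace X] [BorelSpace X]
    (f : X → X) (hf : Continuous f)
    (hexact : ∀ U : Set X, IsOpen U → U.Nonempty → ∃ n : ℕ, Set.univ ⊆ f^[n] '' U)
    (J : X → ℝ≥0)
    (μ : Measure X) [IsProbabilityMeasure μ]
    (hconf : ∀ A : Set X, MeasurableSet A → Set.InjOn f A →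
      μ (f '' A) = ∫⁻ x in A, (J x : ℝ≥0∞) ∂μ)
    (hfib : ∀ y : X, (f ⁻¹' {y}).Countable)
    (B : Set X) (hB : IsOpen B) (hμB : μ B = 0) :
    (∀ n : ℕ, μ (f^[n] '' B) = 0) ∧
    (B.Nonempty → ∀ U : Set X, IsOpen U → U.Nonempty → 0 < μ U) := by
  have hnull : ∀ A, MeasurableSet A → InjOn f A → μ A = 0 → μ (f '' A) = 0 :=
    fun A hA hinj hμA => by rw [hconf A hA hinj]; exact setLIntegral_measure_zero A _ hμA
  have hiter : ∀ n, μ (f^[n] '' B) = 0 := by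
    intro n
    induction n with
    | zero => simpa using hμB
    | succ n ih =>
      rw [Function.iterate_succ', image_comp]
      exact (hB.isSigmaCompact.image (hf.iterate n)).measure_image_eq_zero hf hfib hnull ih
  refine ⟨hiter, fun hBne _ _ _ => ?_⟩
  obtain ⟨n, hn⟩ := hexact B hB hBne
  exact absurd (measure_mono_null hn (hiter n)) (by simp)

theorem stmt_5 {X : Type*} [MetricSpace X] [CompactSpace X]
    [MeasurableSpace X] [BorelSpace X]
    (f : X → X) (hf : Continuous f)
    (hexact : ∀ U : Set X, IsOpen U → U.Nonempty → ∃ n : ℕ, Set.univ ⊆ f^[n] '' U)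
    (J : X → ℝ≥0) (hJ : Continuous J)
    (μ : Measure X) [IsProbabilityMeasure μ]
    (hconf : ∀ A : Set X, MeasurableSet A → Set.InjOn f A →
      μ (f '' A) = ∫⁻ x in A, (J x : ℝ≥0∞) ∂μ)
    (hfib : ∀ y : X, (f ⁻¹' {y}).Countable)
    (B : Set X) (hB : IsOpen B) (hμB : μ B = 0)
    (hJpos : ∀ n : ℕ, ∀ y ∈ f^[n] '' B, 0 < J y) :
    (∀ n : ℕ, μ (f^[n] '' B) = 0) ∧
    (B.Nonempty → ∀ U : Set X, IsOpen U → U.Nonempty → 0 < μ U) :=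
  stmt_5_general f hf hexact J μ hconf hfib B hB hμB
end
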